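/- arXiv:math/0508512 — 4 statements merged into one kernel-verified Lean document; each statement's English description precedes it below -/
import Mathlib

section
/- Let m ≥ 1 and N ≥ 1, and let n : Fin m → ℕ be color multiplicities with ∑_{j} n j = N. Let Δ = gcd_{j} (n j) and let γ(C_N, n) denote the number of cyclic necklaces with multiplicities n. Then N · γ(C_N, n) = ∑_{d ∣ Δ} φ(d) · P(n/d), where P(n/d) is the multinomial coefficient (N/d)! / ∏_j (n j / d)! and φ is Euler's totient function. -/
/-- A coloring of the regular `N`-gon in `m` colors with multiplicities `n`:
a function `f : ZMod N → Fin m` whose fiber over each color `j` has cardinality `n j`. -/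
def IsColoring (N m : ℕ) (n : Fin m → ℕ) (f : ZMod N → Fin m) : Prop :=
  ∀ j, Nat.card {x : ZMod N // f x = j} = n j

/-- Cyclic equivalence of colorings: one is obtained from the other by a rotation `x ↦ x + c`. -/
def cyclicSetoid (N m : ℕ) (n : Fin m → ℕ) :
    Setoid {f : ZMod N → Fin m // IsColoring N m n f} where
  r f g := ∃ c : ZMod N, ∀ x, (g : ZMod N → Fin m) x = (f : ZMod N → Fin m) (x + c)
  iseqv := by
    refine ⟨fun f => ⟨0, fun x => by rw [add_zero]⟩, ?_, ?_⟩
    · rintro f g ⟨c, h⟩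
      exact ⟨-c, fun x => by rw [h, neg_add_cancel_right]⟩
    · rintro f g k ⟨c, h1⟩ ⟨d, h2⟩
      exact ⟨d + c, fun x => by rw [h2, h1, add_assoc]⟩

/-- The number of cyclic necklaces: orbits of colorings under rotations. -/
noncomputable def gammaC (N m : ℕ) (n : Fin m → ℕ) : ℕ :=
  Nat.card (Quotient (cyclicSetoid N m n))

/-- Dihedral equivalence of colorings: one is obtained from the other by an element of
the subgroup of permutations of `ZMod N` generated by `x ↦ x + 1` and `x ↦ -x`. -/
def dihedralSetoid (N m : ℕ) (n : Fin m → ℕ) :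
    Setoid {f : ZMod N → Fin m // IsColoring N m n f} where
  r f g := ∃ σ ∈ Subgroup.closure
      ({Equiv.addRight (1 : ZMod N), Equiv.neg (ZMod N)} : Set (Equiv.Perm (ZMod N))),
      ∀ x, (g : ZMod N → Fin m) x = (f : ZMod N → Fin m) (σ x)
  iseqv := by
    refine ⟨fun f => ⟨1, one_mem _, fun x => rfl⟩, ?_, ?_⟩
    · rintro f g ⟨σ, hσ, h⟩
      exact ⟨σ⁻¹, inv_mem hσ, fun x => by rw [h, ← Equiv.Perm.mul_apply, mul_inv_cancel, Equiv.Perm.one_apply]⟩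
    · rintro f g k ⟨σ, hσ, h1⟩ ⟨τ, hτ, h2⟩
      exact ⟨σ * τ, mul_mem hσ hτ, fun x => by rw [h2, h1, Equiv.Perm.mul_apply]⟩

/-- The number of dihedral necklaces: orbits of colorings under rotations and reflections. -/
noncomputable def gammaD (N m : ℕ) (n : Fin m → ℕ) : ℕ :=
  Nat.card (Quotient (dihedralSetoid N m n))

/-! By Burnside's lemma, `N * γ(C_N, n)` is the sum over the rotations `c` of the number of
colorings fixed by `c`. A coloring fixed by `c` is pulled back from a coloring of
`ZMod N ⧸ ⟨c⟩` whose fibres are `d = addOrderOf c` times smaller, so there are `P(n/d)` of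
them when `d ∣ Δ` and none otherwise. Grouping the rotations by their order, of which there are
`φ d` for each `d ∣ N`, gives `∑_{d ∣ Δ} φ(d) P(n/d)`. -/

open Finset Function Nat

section FiberCard

variable {α β ι : Type*}

noncomputable def fiberCard (f : α → ι) (i : ι) : ℕ := Nat.card {x // f x = i}

theorem fiberCard_comp_equiv (f : α → ι) (e : β ≃ α) : fiberCard (f ∘ e) = fiberCard f :=
  funext fun _ => Nat.card_congr (e.subtypeEquiv fun _ => Iff.rfl)

def Equiv.Perm.compEqEquivFiberEquiv (s f : α → ι) :
    {σ : Equiv.Perm α // s ∘ σ = f} ≃ ∀ i, ({x // f x = i} ≃ {y // s y = i}) where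
  toFun σ i := σ.1.subtypeEquiv fun x => by rw [← congrFun σ.2 x]; rfl
  invFun t := ⟨Equiv.ofFiberEquiv t, funext (Equiv.ofFiberEquiv_map t)⟩
  left_inv σ := rfl
  right_inv t := by funext i; ext ⟨x, rfl⟩; rfl

theorem card_perm_comp_eq [Finite α] [Fintype ι] {s f : α → ι}
    (h : fiberCard f = fiberCard s) :
    Nat.card {σ : Equiv.Perm α // s ∘ σ = f} = ∏ i, (fiberCard s i)! := by
  rw [Nat.card_congr (Equiv.Perm.compEqEquivFiberEquiv s f), Nat.card_pi]
  refine prod_congr rfl fun i _ => ?_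
  obtain ⟨e⟩ := Finite.card_eq.1 (congrFun h i)
  rw [Nat.card_congr (e.equivCongr (Equiv.refl _)), Nat.card_perm, fiberCard]

theorem exists_fiberCard_eq [Finite α] [Fintype ι] {k : ι → ℕ}
    (hk : ∑ i, k i = Nat.card α) : ∃ s : α → ι, fiberCard s = k := by
  obtain ⟨e⟩ := Finite.card_eq.1 (hk.symm.trans (by simp) :
    Nat.card α = Nat.card (Σ i, Fin (k i)))
  refine ⟨fun x => (e x).1, funext fun i => ?_⟩
  rw [fiberCard, Nat.card_congr ((e.subtypeEquiv fun _ => Iff.rfl).trans (Equiv.sigmaSubtype i)),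
    Nat.card_fin]

theorem card_fiberCard_eq [Finite α] [Fintype ι] {k : ι → ℕ}
    (hk : ∑ i, k i = Nat.card α) :
    Nat.card {f : α → ι // fiberCard f = k} = Nat.multinomial univ k := by
  obtain ⟨s, hs⟩ := exists_fiberCard_eq hk
  let C := {f : α → ι // fiberCard f = k}
  have : Fintype C := Fintype.ofFinite C
  -- Double counting: every fibre of `σ ↦ s ∘ σ` has `∏ i, (k i)!` elements.
  let Φ : Equiv.Perm α → C := fun σ => ⟨s ∘ σ, (fiberCard_comp_equiv s σ).trans hs⟩
  have hfiber (f : C) : Nat.card {σ // Φ σ = f} = ∏ i, (k i)! := by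
    rw [Nat.card_congr (Equiv.subtypeEquivRight fun σ => Subtype.ext_iff),
      card_perm_comp_eq (f.2.trans hs.symm), hs]
  have hperm : Nat.card (Equiv.Perm α) = Nat.card C * ∏ i, (k i)! := by
    rw [← Nat.card_congr (Equiv.sigmaFiberEquiv Φ), Nat.card_sigma,
      sum_congr rfl fun f _ => hfiber f, sum_const, Finset.card_univ, smul_eq_mul,
      Nat.card_eq_fintype_card]
  apply Nat.eq_of_mul_eq_mul_right (prod_pos fun i _ => factorial_pos (k i))
  rw [← hperm, Nat.card_perm, ← hk, ← multinomial_spec, mul_comm]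

theorem card_smul_fiberCard_eq [Finite α] [Fintype ι] {d : ℕ} (hd : 0 < d) {n : ι → ℕ}
    (hn : ∑ i, n i = d * Nat.card α) :
    Nat.card {f : α → ι // d • fiberCard f = n} =
      if d ∣ univ.gcd n then Nat.multinomial univ (fun i => n i / d) else 0 := by
  split_ifs with hdvd
  · have hdvd' (i : ι) : d ∣ n i := hdvd.trans (gcd_dvd (mem_univ i))
    have hsum : ∑ i, n i / d = Nat.card α := Nat.eq_of_mul_eq_mul_left hd <| by
      rw [mul_sum, ← hn]; exact sum_congr rfl fun i _ => Nat.mul_div_cancel' (hdvd' i)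
    rw [← card_fiberCard_eq hsum]
    refine Nat.card_congr <| Equiv.subtypeEquivRight fun f => ?_
    simp only [funext_iff, Pi.smul_apply, smul_eq_mul]
    exact forall_congr' fun i => by
      rw [Nat.eq_div_iff_mul_eq_left hd.ne' (hdvd' i), mul_comm, eq_comm]
  · exact Nat.card_eq_zero.2 <| Or.inl
      ⟨fun ⟨f, hf⟩ => hdvd (dvd_gcd fun i _ => ⟨_, (congrFun hf i).symm⟩)⟩

end FiberCard

section Periodic

variable {G ι : Type*} [AddGroup G]

def Function.periodicEquivQuotient (c : G) :
    {f : G → ι // Periodic f c} ≃ (G ⧸ AddSubgroup.zmultiples c → ι) where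
  toFun f := f.2.lift
  invFun g := ⟨fun x => g x, fun x => congrArg g <| QuotientAddGroup.eq.2 <| by simp⟩
  left_inv f := rfl
  right_inv g := funext fun q => QuotientAddGroup.induction_on q fun _ => rfl

theorem fiberCard_comp_mk (H : AddSubgroup G) (g : G ⧸ H → ι) :
    fiberCard (fun x : G => g x) = Nat.card H • fiberCard g := funext fun i => by
  rw [Pi.smul_apply, smul_eq_mul, fiberCard, fiberCard, ← Nat.card_prod]
  exact Nat.card_congr (QuotientAddGroup.preimageMkEquivAddSubgroupProdSet H {q | g q = i})

theorem card_fiberCard_eq_and_periodic [Finite G] [Fintype ι] (c : G) {n : ι → ℕ}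
    (hn : ∑ i, n i = Nat.card G) :
    Nat.card {f : G → ι // fiberCard f = n ∧ Periodic f c} =
      if addOrderOf c ∣ univ.gcd n then
        Nat.multinomial univ (fun i => n i / addOrderOf c) else 0 := by
  let e : {g : G ⧸ AddSubgroup.zmultiples c → ι // addOrderOf c • fiberCard g = n} ≃
      {f : {f : G → ι // Periodic f c} // fiberCard f.1 = n} :=
    (periodicEquivQuotient c).symm.subtypeEquiv fun g => by
      rw [← Nat.card_zmultiples c, ← fiberCard_comp_mk]; rfl
  have hcard : ∑ i, n i = addOrderOf c * Nat.card (G ⧸ AddSubgroup.zmultiples c) := by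
    rw [hn, AddSubgroup.card_eq_card_quotient_mul_card_addSubgroup (AddSubgroup.zmultiples c),
      Nat.card_zmultiples, mul_comm]
  rw [← card_smul_fiberCard_eq (addOrderOf_pos c) hcard, Nat.card_congr e]
  exact Nat.card_congr <| ((Equiv.subtypeSubtypeEquivSubtypeInter _ _).trans
    (Equiv.subtypeEquivRight fun _ => and_comm)).symm

end Periodic

theorem IsAddCyclic.sum_addOrderOf {G M : Type*} [AddGroup G] [IsAddCyclic G] [Fintype G]
    [AddCommMonoid M] (F : ℕ → M) :
    ∑ c : G, F (addOrderOf c) = ∑ d ∈ (Fintype.card G).divisors, φ d • F d := by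
  classical
  rw [← sum_fiberwise_of_maps_to (g := addOrderOf) (t := (Fintype.card G).divisors)
    fun c _ => Nat.mem_divisors.2 ⟨addOrderOf_dvd_card, Fintype.card_ne_zero⟩]
  refine sum_congr rfl fun d hd => ?_
  rw [sum_congr rfl fun c hc => congrArg F (mem_filter.1 hc).2, sum_const,
    IsAddCyclic.card_addOrderOf_eq_totient (Nat.dvd_of_mem_divisors hd)]

section Necklace

variable {N m : ℕ} {n : Fin m → ℕ}

theorem isColoring_iff_fiberCard_eq {f : ZMod N → Fin m} :
    IsColoring N m n f ↔ fiberCard f = n :=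
  funext_iff.symm

instance coloringAddAction : AddAction (ZMod N) {f : ZMod N → Fin m // IsColoring N m n f} where
  vadd c f := ⟨f.1 ∘ Equiv.addRight c, isColoring_iff_fiberCard_eq.2 <|
    (fiberCard_comp_equiv f.1 _).trans (isColoring_iff_fiberCard_eq.1 f.2)⟩
  zero_vadd f := Subtype.ext <| funext fun x => congrArg f.1 (add_zero x)
  add_vadd a b f := Subtype.ext <| funext fun x => congrArg f.1 (add_assoc x a b).symm

@[simp]
theorem coloring_vadd_apply (c : ZMod N) (f : {f : ZMod N → Fin m // IsColoring N m n f})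
    (x : ZMod N) : (c +ᵥ f).1 x = f.1 (x + c) :=
  rfl

theorem cyclicSetoid_eq_orbitRel :
    cyclicSetoid N m n = AddAction.orbitRel (ZMod N) {f // IsColoring N m n f} := by
  ext f g
  rw [AddAction.orbitRel_apply, AddAction.mem_orbit_iff]
  constructor
  · rintro ⟨c, h⟩
    exact ⟨-c, Subtype.ext <| funext fun x => by simp [h]⟩
  · rintro ⟨c, rfl⟩
    exact ⟨-c, fun x => by simp⟩

theorem card_fixedBy_coloring [NeZero N] (hsum : ∑ j, n j = N) (c : ZMod N) :
    Nat.card (AddAction.fixedBy {f // IsColoring N m n f} c) =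
      if addOrderOf c ∣ univ.gcd n then
        Nat.multinomial univ (fun j => n j / addOrderOf c) else 0 := by
  rw [← card_fiberCard_eq_and_periodic c (hsum.trans (Nat.card_zmod N).symm)]
  refine Nat.card_congr <| (Equiv.subtypeEquivRight fun f => ?_).trans
    ((Equiv.subtypeSubtypeEquivSubtypeInter _ _).trans
      (Equiv.subtypeEquivRight fun f => and_congr_left' isColoring_iff_fiberCard_eq))
  simp only [AddAction.mem_fixedBy, Subtype.ext_iff, funext_iff, coloring_vadd_apply]
  rfl

theorem mul_gammaC_eq_sum_card_fixedBy [NeZero N] :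
    N * gammaC N m n =
      ∑ c : ZMod N, Nat.card (AddAction.fixedBy {f // IsColoring N m n f} c) := by
  classical
  have burnside :=
    AddAction.sum_card_fixedBy_eq_card_orbits_mul_card_addGroup (ZMod N) {f // IsColoring N m n f}
  simp only [← Nat.card_eq_fintype_card] at burnside
  rw [burnside, Nat.card_zmod, gammaC, cyclicSetoid_eq_orbitRel, mul_comm]

end Necklace

theorem cyclic_necklace_count_general (m N : ℕ) (hN : 1 ≤ N)
    (n : Fin m → ℕ) (hsum : ∑ j, n j = N) :
    N * gammaC N m n =
      ∑ d ∈ (Finset.univ.gcd n).divisors,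
        Nat.totient d * Nat.multinomial Finset.univ (fun j => n j / d) := by
  have : NeZero N := ⟨by omega⟩
  have hΔN : univ.gcd n ∣ N := hsum ▸ dvd_sum fun j _ => gcd_dvd (mem_univ j)
  let fixedCount (d : ℕ) : ℕ :=
    if d ∣ univ.gcd n then Nat.multinomial univ (fun j => n j / d) else 0
  calc N * gammaC N m n = ∑ c : ZMod N, fixedCount (addOrderOf c) := by
        rw [mul_gammaC_eq_sum_card_fixedBy]
        exact sum_congr rfl fun c _ => card_fixedBy_coloring hsum c
    _ = ∑ d ∈ (Fintype.card (ZMod N)).divisors, φ d • fixedCount d :=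
        IsAddCyclic.sum_addOrderOf fixedCount
    _ = _ := by
        rw [ZMod.card, ← Nat.divisors_filter_dvd_of_dvd (by omega) hΔN, sum_filter]
        exact sum_congr rfl fun d _ => by rw [smul_eq_mul, mul_ite, mul_zero]

/-- Pólya enumeration for cyclic necklaces:
`N * γ(C_N, n) = ∑_{d ∣ Δ} φ(d) * P(n/d)` where `Δ = gcd_j (n j)`. -/
theorem cyclic_necklace_count (m N : ℕ) (hm : 1 ≤ m) (hN : 1 ≤ N)
    (n : Fin m → ℕ) (hsum : ∑ j, n j = N) :
    N * gammaC N m n =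
      ∑ d ∈ (Finset.univ.gcd n).divisors,
        Nat.totient d * Nat.multinomial Finset.univ (fun j => n j / d) :=
  cyclic_necklace_count_general m N hN n hsum
end

section
/- Let m ≥ 1 and let n : Fin m → ℕ with N = ∑_j n j ≥ 1, and let Δ = gcd_j (n j). Then N divides ∑_{d ∣ Δ} φ(d) · P(n/d), where P(n/d) = (N/d)! / ∏_j (n j / d)! is the multinomial coefficient and φ is Euler's totient function. -/
set_option maxHeartbeats 1000000

open Finset

variable {ι : Type*} [Fintype ι] [DecidableEq ι]

lemma card_content_eq_multinomial (f : ι → ℕ) (s : Finset ι) (α : Type) [Fintype α] [DecidableEq α]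
    (h : ∑ j ∈ s, f j = Fintype.card α) :
    Nat.card {w : α → ι // ∀ j, #{i | w i = j} = if j ∈ s then f j else 0} =
      Nat.multinomial s f := by
  induction s using Finset.cons_induction generalizing α with
  | empty =>
    simp only [Finset.sum_empty] at h
    haveI : IsEmpty α := Fintype.card_eq_zero_iff.mp h.symm
    haveI : Unique {w : α → ι // ∀ j, #{i | w i = j} = if j ∈ (∅ : Finset ι) then f j else 0} :=
      { default := ⟨fun i => (IsEmpty.false i).elim, fun j => by simp⟩
        uniq := fun w => Subtype.ext (funext fun i => (IsEmpty.false i).elim) }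
    rw [Nat.multinomial_empty]
    exact Nat.card_unique
  | cons x t hx ih =>
    rw [Finset.sum_cons] at h
    set C : (α → ι) → Prop :=
      fun w => ∀ j, #(filter (fun i => w i = j) univ) = if j ∈ Finset.cons x t hx then f j else 0
      with hC
    have step1 : Nat.card {w : α → ι // C w} = #(univ.filter C) := by
      rw [Nat.card_eq_fintype_card, Fintype.card_subtype]
    have maps : ∀ w ∈ univ.filter C,
        (filter (fun i => w i = x) univ) ∈ Finset.univ.powersetCard (f x) := by
      intro w hw
      rw [Finset.mem_filter] at hw
      rw [Finset.mem_powersetCard_univ]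
      simpa using hw.2 x
    have step2 := Finset.card_eq_sum_card_fiberwise maps
    -- each fiber has card multinomial t f
    have fiber_card : ∀ P ∈ Finset.univ.powersetCard (f x),
        #((univ.filter C).filter fun w => filter (fun i => w i = x) univ = P) =
          Nat.multinomial t f := by
      intro P hP
      rw [Finset.mem_powersetCard_univ] at hP
      rw [Finset.filter_filter]
      have e1 : #(univ.filter fun w => C w ∧ filter (fun i => w i = x) univ = P) =
          Nat.card {w : α → ι // C w ∧ filter (fun i => w i = x) univ = P} := by
        rw [Nat.card_eq_fintype_card, Fintype.card_subtype]
      rw [e1]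
      have key : {w : α → ι // C w ∧ filter (fun i => w i = x) univ = P} ≃
          {v : {a : α // a ∉ P} → ι // ∀ j, #(filter (fun i => v i = j) univ) =
            if j ∈ t then f j else 0} := by
        refine
          { toFun := fun w => ⟨fun a => w.1 a.1, fun j => ?_⟩
            invFun := fun v => ⟨fun a => if h : a ∈ P then x else v.1 ⟨a, h⟩, ?_, ?_⟩
            left_inv := fun w => ?_
            right_inv := fun v => ?_ }
        · obtain ⟨w, hw, hwP⟩ := w
          dsimp only
          rcases eq_or_ne j x with rfl | hj
          · rw [if_neg hx, Finset.card_eq_zero, Finset.filter_eq_empty_iff]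
            rintro ⟨a, ha⟩ _
            intro hax
            exact ha (hwP ▸ (by simp [hax]))
          · have h2 : #(filter (fun i => w i = j) univ) = if j ∈ t then f j else 0 := by
              have := hw j; simpa [Finset.mem_cons, hj] using this
            rw [show (if j ∈ t then f j else 0) = #(filter (fun i => w i = j) univ) from h2.symm]
            refine Finset.card_bij' (fun a _ => a.1)
              (fun b hb => ⟨b, by
                simp only [mem_filter, mem_univ, true_and] at hb
                rw [← hwP]
                simp only [mem_filter, mem_univ, true_and, hb]
                exact hj⟩)
              ?_ ?_ ?_ ?_
            · intro a ha
              simp only [mem_filter, mem_univ, true_and] at ha ⊢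
              exact ha
            · intro b hb
              simp only [mem_filter, mem_univ, true_and] at hb ⊢
              exact hb
            · intros; rfl
            · intros; rfl
        · -- C of invFun
          obtain ⟨v, hv⟩ := v
          dsimp only
          intro j
          have hvx : ∀ b, v b ≠ x := by
            have := hv x
            rw [if_neg hx, Finset.card_eq_zero, Finset.filter_eq_empty_iff] at this
            exact fun b hb => this (Finset.mem_univ b) hb
          rcases eq_or_ne j x with rfl | hj
          · rw [if_pos (Finset.mem_cons_self _ _), ← hP]
            congr 1
            ext a
            simp only [mem_filter, mem_univ, true_and]
            split_ifs with h'
            · simp [h']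
            · simp [h', hvx ⟨a, h'⟩]
          · have h2 : (if j ∈ Finset.cons x t hx then f j else 0) = if j ∈ t then f j else 0 := by
              simp [Finset.mem_cons, hj]
            rw [h2, ← hv j]
            refine Finset.card_bij' (fun a ha => ⟨a, ?_⟩) (fun b _ => b.1) ?_ ?_ ?_ ?_
            · simp only [mem_filter, mem_univ, true_and] at ha
              intro hmem
              rw [dif_pos hmem] at ha
              exact hj ha.symm
            · intro a ha
              simp only [mem_filter, mem_univ, true_and] at ha ⊢
              rwa [dif_neg] at ha
            · intro b hb
              simp only [mem_filter, mem_univ, true_and] at hb ⊢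
              rw [dif_neg b.2]
              simpa using hb
            · intros; rfl
            · intros; rfl
        · -- fiber of invFun = P
          obtain ⟨v, hv⟩ := v
          dsimp only
          have hvx : ∀ b, v b ≠ x := by
            have := hv x
            rw [if_neg hx, Finset.card_eq_zero, Finset.filter_eq_empty_iff] at this
            exact fun b hb => this (Finset.mem_univ b) hb
          ext a
          simp only [mem_filter, mem_univ, true_and]
          split_ifs with h'
          · simp [h']
          · simp [h', hvx ⟨a, h'⟩]
        · refine Subtype.ext (funext fun a => ?_)
          dsimp only
          split_ifs with h'
          · rw [← w.2.2] at h'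
            exact ((Finset.mem_filter.mp h').2).symm
          · rfl
        · refine Subtype.ext (funext fun a => ?_)
          dsimp only
          rw [dif_neg a.2]
      rw [Nat.card_congr key]
      have hcard : Fintype.card {a : α // a ∉ P} = Fintype.card α - f x := by
        rw [Fintype.card_subtype]
        rw [Finset.filter_not, Finset.filter_mem_eq_inter, Finset.univ_inter,
          Finset.card_sdiff_of_subset (Finset.subset_univ _), Finset.card_univ, hP]
      have hsum2 : ∑ j ∈ t, f j = Fintype.card {a : α // a ∉ P} := by
        rw [hcard, ← h]
        exact (Nat.add_sub_cancel_left _ _).symm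
      exact ih _ hsum2
    rw [step1, step2, Finset.sum_congr rfl fiber_card, Finset.sum_const,
      Finset.card_powersetCard, Finset.card_univ, smul_eq_mul, Nat.multinomial_cons, h]


section Words

variable {m : ℕ} (N : ℕ) [NeZero N] (n : Fin m → ℕ)

/-- periodicity propagates to multiples -/
lemma periodic_nsmul (w : ZMod N → Fin m) (g : ZMod N) (hw : ∀ i, w (i + g) = w i) :
    ∀ (k : ℕ) (i : ZMod N), w (i + (k : ZMod N) * g) = w i := by
  intro k
  induction k with
  | zero => simp
  | succ k ih =>
    intro i
    have : i + ((k : ℕ) + 1 : ZMod N) * g = (i + g) + (k : ZMod N) * g := by ring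
    rw [show ((k + 1 : ℕ) : ZMod N) = ((k : ℕ) + 1 : ZMod N) by push_cast; ring, this, ih, hw]

lemma periodic_zmod_mul (w : ZMod N → Fin m) (g : ZMod N) (hw : ∀ i, w (i + g) = w i)
    (z : ZMod N) (i : ZMod N) : w (i + z * g) = w i := by
  have hz : ((z.val : ℕ) : ZMod N) = z := ZMod.natCast_rightInverse z
  rw [← hz]
  exact periodic_nsmul N w g hw z.val i

/-- fixed by `g` iff fixed by the cast of `gcd N g.val` -/
lemma periodic_iff_gcd (w : ZMod N → Fin m) (g : ZMod N) :
    (∀ i, w (i + g) = w i) ↔ (∀ i, w (i + ((N.gcd g.val : ℕ) : ZMod N)) = w i) := by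
  constructor
  · intro hw i
    have hbezout : ((N.gcd g.val : ℕ) : ZMod N) = ((Nat.gcdB N g.val : ℤ) : ZMod N) * g := by
      have h := Nat.gcd_eq_gcd_ab N g.val
      have : ((N.gcd g.val : ℕ) : ZMod N) = ((N : ℤ) * Nat.gcdA N g.val
          + (g.val : ℤ) * Nat.gcdB N g.val : ℤ) := by
        rw [← h]; push_cast; ring
      rw [this]
      push_cast
      rw [ZMod.natCast_self, ZMod.natCast_val, ZMod.cast_id]
      ring
    rw [hbezout]
    exact periodic_zmod_mul N w g hw _ i
  · intro hw i
    obtain ⟨t, ht⟩ := Nat.gcd_dvd_right N g.val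
    have hg : ((g.val : ℕ) : ZMod N) = g := ZMod.natCast_rightInverse g
    rw [← hg, ht]
    push_cast
    rw [mul_comm]
    exact periodic_zmod_mul N w _ hw _ i

end Words

section Count

variable {m : ℕ} (N : ℕ) [NeZero N]

lemma card_val_mod (c d : ℕ) (hcd : c * d = N) (r : ℕ) (hr : r < c) :
    #(filter (fun i : ZMod N => i.val % c = r) univ) = d := by
  have hc : 0 < c := lt_of_le_of_lt (Nat.zero_le _) hr
  rw [show d = #(range d) by rw [Finset.card_range]]
  refine Finset.card_bij' (fun i _ => i.val / c) (fun k _ => ((r + c * k : ℕ) : ZMod N))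
    ?_ ?_ ?_ ?_
  · intro i hi
    simp only [mem_filter, mem_univ, true_and] at hi
    rw [Finset.mem_range]
    have hiv : i.val < d * c := by
      have h1 := ZMod.val_lt i
      have hcd' : d * c = N := by rw [mul_comm]; exact hcd
      omega
    rw [Nat.div_lt_iff_lt_mul hc]
    exact hiv
  · intro k hk
    rw [Finset.mem_range] at hk
    simp only [mem_filter, mem_univ, true_and]
    have hlt : r + c * k < N := by
      calc r + c * k < c + c * k := by omega
        _ = c * (k + 1) := by ring
        _ ≤ c * d := Nat.mul_le_mul_left c hk
        _ = N := hcd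
    rw [ZMod.val_natCast_of_lt hlt, Nat.add_mul_mod_self_left, Nat.mod_eq_of_lt hr]
  · intro i hi
    simp only [mem_filter, mem_univ, true_and] at hi
    show ((r + c * (i.val / c) : ℕ) : ZMod N) = i
    have h3 : r + c * (i.val / c) = i.val := by rw [← hi]; exact Nat.mod_add_div _ _
    rw [h3]
    exact ZMod.natCast_rightInverse i
  · intro k hk
    rw [Finset.mem_range] at hk
    have hlt : r + c * k < N := by
      calc r + c * k < c + c * k := by omega
        _ = c * (k + 1) := by ring
        _ ≤ c * d := Nat.mul_le_mul_left c hk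
        _ = N := hcd
    show (((r + c * k : ℕ) : ZMod N)).val / c = k
    rw [ZMod.val_natCast_of_lt hlt, Nat.add_mul_div_left _ _ hc, Nat.div_eq_of_lt hr, Nat.zero_add]

lemma periodic_mod (c : ℕ) (w : ZMod N → Fin m)
    (hw : ∀ i, w (i + ((c : ℕ) : ZMod N)) = w i) (x : ℕ) :
    w ((x : ℕ) : ZMod N) = w ((x % c : ℕ) : ZMod N) := by
  have key : ∀ (q r : ℕ), w ((r + c * q : ℕ) : ZMod N) = w ((r : ℕ) : ZMod N) := by
    intro q
    induction q with
    | zero => simp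
    | succ q ih =>
      intro r
      have : ((r + c * (q + 1) : ℕ) : ZMod N) = ((r + c * q : ℕ) : ZMod N) + (c : ZMod N) := by
        push_cast; ring
      rw [this, hw, ih]
  conv_lhs => rw [← Nat.mod_add_div x c]
  exact key _ _

lemma fiber_periodic (c d : ℕ) (hcd : c * d = N) (hc : 0 < c) (w : ZMod N → Fin m)
    (hw : ∀ i, w (i + ((c : ℕ) : ZMod N)) = w i) (j : Fin m) :
    #(filter (fun i : ZMod N => w i = j) univ) =
      d * #(filter (fun s : Fin c => w ((s.val : ℕ) : ZMod N) = j) univ) := by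
  have maps : ∀ i ∈ filter (fun i : ZMod N => w i = j) univ,
      (⟨i.val % c, Nat.mod_lt _ hc⟩ : Fin c) ∈
        filter (fun s : Fin c => w ((s.val : ℕ) : ZMod N) = j) univ := by
    intro i hi
    simp only [mem_filter, mem_univ, true_and] at hi ⊢
    rw [← periodic_mod N c w hw i.val, ZMod.natCast_rightInverse i]
    exact hi
  rw [Finset.card_eq_sum_card_fiberwise maps]
  rw [Finset.sum_congr rfl (fun s hs => ?_), Finset.sum_const, smul_eq_mul, mul_comm]
  -- each fiber has cardinality d
  have : (filter (fun i : ZMod N => (⟨i.val % c, Nat.mod_lt _ hc⟩ : Fin c) = s)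
      (filter (fun i : ZMod N => w i = j) univ)) =
      filter (fun i : ZMod N => i.val % c = s.val) univ := by
    simp only [mem_filter, mem_univ, true_and] at hs
    ext i
    simp only [Finset.mem_filter, mem_univ, true_and]
    constructor
    · rintro ⟨-, h2⟩
      rw [← h2]
    · intro h1
      refine ⟨?_, by exact Fin.ext h1⟩
      rw [← ZMod.natCast_rightInverse i, periodic_mod N c w hw i.val, h1]
      exact hs
  rw [this, card_val_mod N c d hcd s.val s.isLt]

end Count

section Equiv

variable {m : ℕ} (N : ℕ) [NeZero N]

lemma card_periodic_content (n : Fin m → ℕ) (c d : ℕ) (hcd : c * d = N) (hc : 0 < c) :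
    Nat.card {w : ZMod N → Fin m // (∀ j, #(filter (fun i => w i = j) univ) = n j) ∧
        ∀ i, w (i + ((c : ℕ) : ZMod N)) = w i} =
      Nat.card {u : Fin c → Fin m // ∀ j, d * #(filter (fun s => u s = j) univ) = n j} := by
  have hd : 0 < d := by
    rcases Nat.eq_zero_or_pos d with h | h
    · exfalso; have := hcd; rw [h, Nat.mul_zero] at this
      exact (NeZero.ne N) this.symm
    · exact h
  have hcN : c ≤ N := by
    calc c = c * 1 := (Nat.mul_one c).symm
      _ ≤ c * d := Nat.mul_le_mul_left c hd
      _ = N := hcd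
  have hdvd : c ∣ N := ⟨d, hcd.symm⟩
  -- key fact: for u and its expansion, values on block representatives
  have block_eq : ∀ (w : ZMod N → Fin m) (hw : ∀ i, w (i + ((c : ℕ) : ZMod N)) = w i)
      (s : Fin c), w ((s.val : ℕ) : ZMod N) = w ((s.val : ℕ) : ZMod N) := fun _ _ _ => rfl
  refine Nat.card_congr ⟨fun w => ⟨fun s => w.1 ((s.val : ℕ) : ZMod N), fun j => by
      rw [← fiber_periodic N c d hcd hc w.1 w.2.2 j]; exact w.2.1 j⟩,
    fun u => ⟨fun i => u.1 ⟨i.val % c, Nat.mod_lt _ hc⟩, ?_, ?_⟩, ?_, ?_⟩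
  · -- content
    intro j
    set w' : ZMod N → Fin m := fun i => u.1 ⟨i.val % c, Nat.mod_lt _ hc⟩ with hw'
    have hper : ∀ i, w' (i + ((c : ℕ) : ZMod N)) = w' i := by
      intro i
      refine congrArg u.1 (Fin.ext ?_)
      show (i + ((c : ℕ) : ZMod N)).val % c = i.val % c
      have h0 : c % N % c = 0 := by rw [Nat.mod_mod_of_dvd _ hdvd, Nat.mod_self]
      calc (i + ((c : ℕ) : ZMod N)).val % c = ((i.val + (c % N)) % N) % c := by
            rw [ZMod.val_add, ZMod.val_natCast]
        _ = (i.val + (c % N)) % c := Nat.mod_mod_of_dvd _ hdvd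
        _ = (i.val % c + c % N % c) % c := Nat.add_mod _ _ _
        _ = i.val % c := by rw [h0, Nat.add_zero, Nat.mod_mod_of_dvd _ dvd_rfl]
    rw [fiber_periodic N c d hcd hc w' hper j]
    have heq : ∀ s : Fin c, w' ((s.val : ℕ) : ZMod N) = u.1 s := by
      intro s
      refine congrArg u.1 (Fin.ext ?_)
      show ((s.val : ℕ) : ZMod N).val % c = s.val
      rw [ZMod.val_natCast_of_lt (lt_of_lt_of_le s.isLt hcN), Nat.mod_eq_of_lt s.isLt]
    rw [show (filter (fun s : Fin c => w' ((s.val : ℕ) : ZMod N) = j) univ) =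
        filter (fun s : Fin c => u.1 s = j) univ from Finset.filter_congr fun s _ => by
          rw [heq s]]
    exact u.2 j
  · -- periodicity
    intro i
    refine congrArg u.1 (Fin.ext ?_)
    show (i + ((c : ℕ) : ZMod N)).val % c = i.val % c
    have h0 : c % N % c = 0 := by rw [Nat.mod_mod_of_dvd _ hdvd, Nat.mod_self]
    calc (i + ((c : ℕ) : ZMod N)).val % c = ((i.val + (c % N)) % N) % c := by
          rw [ZMod.val_add, ZMod.val_natCast]
      _ = (i.val + (c % N)) % c := Nat.mod_mod_of_dvd _ hdvd
      _ = (i.val % c + c % N % c) % c := Nat.add_mod _ _ _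
      _ = i.val % c := by rw [h0, Nat.add_zero, Nat.mod_mod_of_dvd _ dvd_rfl]
  · -- left inverse
    intro w
    refine Subtype.ext (funext fun i => ?_)
    show w.1 (((i.val % c : ℕ) : ZMod N)) = w.1 i
    rw [← periodic_mod N c w.1 w.2.2 i.val, ZMod.natCast_rightInverse i]
  · -- right inverse
    intro u
    refine Subtype.ext (funext fun s => ?_)
    refine congrArg u.1 (Fin.ext ?_)
    show ((s.val : ℕ) : ZMod N).val % c = s.val
    rw [ZMod.val_natCast_of_lt (lt_of_lt_of_le s.isLt hcN), Nat.mod_eq_of_lt s.isLt]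

end Equiv

section Blocks

variable {m : ℕ}

lemma card_block_words (N : ℕ) [NeZero N] (n : Fin m → ℕ) (c d : ℕ) (hcd : c * d = N)
    (hsum : ∑ j, n j = N) :
    Nat.card {u : Fin c → Fin m // ∀ j, d * #(filter (fun s => u s = j) univ) = n j} =
      if ∀ j, d ∣ n j then Nat.multinomial univ (fun j => n j / d) else 0 := by
  have hd : 0 < d := by
    rcases Nat.eq_zero_or_pos d with h | h
    · exfalso; rw [h, Nat.mul_zero] at hcd; exact (NeZero.ne N) hcd.symm
    · exact h
  split_ifs with h
  · have he : ∀ u : Fin c → Fin m, (∀ j, d * #(filter (fun s => u s = j) univ) = n j) ↔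
        (∀ j, #(filter (fun s => u s = j) univ) =
          if j ∈ (univ : Finset (Fin m)) then n j / d else 0) := by
      intro u
      refine forall_congr' fun j => ?_
      rw [if_pos (Finset.mem_univ j)]
      constructor
      · intro hj
        rw [← hj, Nat.mul_div_cancel_left _ hd]
      · intro hj
        rw [hj]
        exact Nat.mul_div_cancel' (h j)
    rw [Nat.card_congr (Equiv.subtypeEquivRight he)]
    refine card_content_eq_multinomial _ _ _ ?_
    rw [Fintype.card_fin]
    have h1 : d * ∑ j, n j / d = ∑ j, n j := by
      rw [Finset.mul_sum]
      exact Finset.sum_congr rfl fun j _ => Nat.mul_div_cancel' (h j)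
    have h2 : d * ∑ j, n j / d = d * c := by rw [h1, hsum, ← hcd]; ring
    exact Nat.eq_of_mul_eq_mul_left hd h2
  · push_neg at h
    obtain ⟨j0, hj0⟩ := h
    haveI : IsEmpty {u : Fin c → Fin m // ∀ j, d * #(filter (fun s => u s = j) univ) = n j} :=
      ⟨fun u => hj0 ⟨_, (u.2 j0).symm⟩⟩
    exact Nat.card_of_isEmpty

end Blocks

section Action

variable (m N : ℕ) [NeZero N] (n : Fin m → ℕ)

instance contentVAdd :
    VAdd (ZMod N) {w : ZMod N → Fin m // ∀ j, #(filter (fun i => w i = j) univ) = n j} where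
  vadd g w := ⟨fun i => w.1 (i + g), fun j => by
    rw [← w.2 j]
    refine Finset.card_bij' (fun i _ => i + g) (fun i _ => i - g) ?_ ?_ ?_ ?_
    · intro i hi
      simp only [mem_filter, mem_univ, true_and] at hi ⊢
      exact hi
    · intro i hi
      simp only [mem_filter, mem_univ, true_and] at hi ⊢
      rw [sub_add_cancel]
      exact hi
    · intro i _; show i + g - g = i; rw [add_sub_cancel_right]
    · intro i _; show i - g + g = i; rw [sub_add_cancel]⟩

@[simp] lemma contentVAdd_apply (g : ZMod N)
    (w : {w : ZMod N → Fin m // ∀ j, #(filter (fun i => w i = j) univ) = n j}) (i : ZMod N) :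
    (g +ᵥ w).1 i = w.1 (i + g) := rfl

instance contentAddAction :
    AddAction (ZMod N) {w : ZMod N → Fin m // ∀ j, #(filter (fun i => w i = j) univ) = n j} where
  zero_vadd w := Subtype.ext (funext fun i => by
    rw [contentVAdd_apply, add_zero])
  add_vadd g h w := Subtype.ext (funext fun i => by
    rw [contentVAdd_apply, contentVAdd_apply, contentVAdd_apply, add_assoc])

lemma card_fixedBy_eq (hsum : ∑ j, n j = N) (g : ZMod N) :
    Nat.card (AddAction.fixedBy
        {w : ZMod N → Fin m // ∀ j, #(filter (fun i => w i = j) univ) = n j} g) =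
      if (addOrderOf g) ∣ Finset.univ.gcd n then
        Nat.multinomial univ (fun j => n j / addOrderOf g) else 0 := by
  set X := {w : ZMod N → Fin m // ∀ j, #(filter (fun i => w i = j) univ) = n j} with hX
  set c : ℕ := N.gcd g.val with hc
  set d : ℕ := addOrderOf g with hd
  have hdg : d = N / c := by
    rw [hd, hc]
    conv_lhs => rw [← (ZMod.natCast_rightInverse g : ((g.val : ℕ) : ZMod N) = g)]
    exact ZMod.addOrderOf_coe g.val (NeZero.ne N)
  have hcdvd : c ∣ N := Nat.gcd_dvd_left _ _
  have hcd : c * d = N := by rw [hdg]; exact Nat.mul_div_cancel' hcdvd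
  have hcpos : 0 < c := Nat.gcd_pos_of_pos_left _ (Nat.pos_of_ne_zero (NeZero.ne N))
  -- step 1: fixedBy set ≃ periodic content words with period g
  have e1 : (AddAction.fixedBy X g) ≃
      {w : ZMod N → Fin m // (∀ j, #(filter (fun i => w i = j) univ) = n j) ∧
        ∀ i, w (i + g) = w i} :=
    { toFun := fun x => ⟨x.1.1, x.1.2, fun i => congrFun (congrArg Subtype.val x.2) i⟩
      invFun := fun w => ⟨⟨w.1, w.2.1⟩, Subtype.ext (funext w.2.2)⟩
      left_inv := fun x => Subtype.ext (Subtype.ext rfl)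
      right_inv := fun w => Subtype.ext rfl }
  -- step 2: period g ↔ period c
  have e2 : {w : ZMod N → Fin m // (∀ j, #(filter (fun i => w i = j) univ) = n j) ∧
        ∀ i, w (i + g) = w i} ≃
      {w : ZMod N → Fin m // (∀ j, #(filter (fun i => w i = j) univ) = n j) ∧
        ∀ i, w (i + ((c : ℕ) : ZMod N)) = w i} :=
    Equiv.subtypeEquivRight fun w =>
      and_congr_right fun _ => periodic_iff_gcd N w g
  rw [Nat.card_congr (e1.trans e2), card_periodic_content N n c d hcd hcpos,
    card_block_words N n c d hcd hsum]
  have hiff : (∀ j, d ∣ n j) ↔ d ∣ Finset.univ.gcd n := by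
    rw [Finset.dvd_gcd_iff]
    exact ⟨fun h b _ => h b, fun h b => h b (Finset.mem_univ b)⟩
  by_cases h : d ∣ Finset.univ.gcd n
  · rw [if_pos (hiff.mpr h), if_pos h]
  · rw [if_neg (fun hh => h (hiff.mp hh)), if_neg h]

end Action

/-- `N` divides `∑_{d ∣ Δ} φ(d) * P(n/d)` where `N = ∑ j, n j` and `Δ = gcd_j (n j)`. -/
theorem N_dvd_sum_totient_mul_multinomial (m : ℕ) (hm : 1 ≤ m) (n : Fin m → ℕ)
    (hN : 1 ≤ ∑ j, n j) :
    (∑ j, n j) ∣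
      ∑ d ∈ (Finset.univ.gcd n).divisors,
        Nat.totient d * Nat.multinomial Finset.univ (fun j => n j / d) := by
  classical
  haveI : NeZero (∑ j, n j) := ⟨by omega⟩
  set N : ℕ := ∑ j, n j with hNdef
  set Δ : ℕ := Finset.univ.gcd n with hΔ
  set X := {w : ZMod N → Fin m // ∀ j, #(filter (fun i => w i = j) univ) = n j} with hX
  haveI : Fintype (Quotient (AddAction.orbitRel (ZMod N) X)) := Fintype.ofFinite _
  haveI : ∀ a : ZMod N, Fintype (AddAction.fixedBy X a) := fun a => Fintype.ofFinite _
  have burnside := AddAction.sum_card_fixedBy_eq_card_orbits_mul_card_addGroup (ZMod N) X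
  rw [ZMod.card] at burnside
  have hfix : ∀ g : ZMod N, Fintype.card (AddAction.fixedBy X g) =
      if (addOrderOf g) ∣ Δ then Nat.multinomial univ (fun j => n j / addOrderOf g) else 0 :=
    fun g => by rw [← Nat.card_eq_fintype_card]; exact card_fixedBy_eq m N n rfl g
  set F : ℕ → ℕ := fun d =>
    if d ∣ Δ then Nat.multinomial univ (fun j => n j / d) else 0 with hF
  have maps : ∀ g ∈ (univ : Finset (ZMod N)), addOrderOf g ∈ N.divisors := by
    intro g _
    refine Nat.mem_divisors.mpr ⟨?_, NeZero.ne N⟩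
    have h1 : addOrderOf g ∣ Fintype.card (ZMod N) := addOrderOf_dvd_card
    rwa [ZMod.card] at h1
  have hdvd_card : ∀ d ∈ N.divisors, d ∣ Fintype.card (ZMod N) := by
    intro d hd
    rw [ZMod.card]
    exact (Nat.mem_divisors.mp hd).1
  have step : ∑ g : ZMod N, Fintype.card (AddAction.fixedBy X g) =
      ∑ d ∈ N.divisors, Nat.totient d * F d := by
    rw [Finset.sum_congr rfl fun g _ => hfix g]
    rw [← Finset.sum_fiberwise_of_maps_to maps (fun g => F (addOrderOf g))]
    refine Finset.sum_congr rfl fun d hd => ?_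
    have : ∑ g ∈ univ.filter (fun g : ZMod N => addOrderOf g = d), F (addOrderOf g) =
        ∑ g ∈ univ.filter (fun g : ZMod N => addOrderOf g = d), F d := by
      refine Finset.sum_congr rfl fun g hg => ?_
      rw [(Finset.mem_filter.mp hg).2]
    rw [this, Finset.sum_const, smul_eq_mul]
    congr 1
    exact IsAddCyclic.card_addOrderOf_eq_totient (hdvd_card d hd)
  -- restrict from divisors of N to divisors of Δ
  have hΔdvd : Δ ∣ N := Finset.dvd_sum fun j _ => Finset.gcd_dvd (Finset.mem_univ j)
  have hsub : Δ.divisors ⊆ N.divisors := Nat.divisors_subset_of_dvd (NeZero.ne N) hΔdvd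
  have hvanish : ∀ d ∈ N.divisors, d ∉ Δ.divisors → Nat.totient d * F d = 0 := by
    intro d hd hnd
    have hΔ0 : Δ ≠ 0 := fun h0 => by
      rw [h0] at hΔdvd
      exact NeZero.ne N (Nat.eq_zero_of_zero_dvd hΔdvd)
    have : ¬ d ∣ Δ := fun hdd => hnd (Nat.mem_divisors.mpr ⟨hdd, hΔ0⟩)
    rw [hF]
    simp only [this, if_false, Nat.mul_zero]
  have final : ∑ d ∈ N.divisors, Nat.totient d * F d =
      ∑ d ∈ Δ.divisors, Nat.totient d * Nat.multinomial univ (fun j => n j / d) := by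
    rw [← Finset.sum_subset hsub hvanish]
    refine Finset.sum_congr rfl fun d hd => ?_
    have : d ∣ Δ := (Nat.mem_divisors.mp hd).1
    rw [hF]
    simp only [this, if_true]
  rw [← final, ← step, burnside]
  exact dvd_mul_left N _
end

section
/- Let m ≥ 1, let n : Fin m → ℕ with N = ∑_j n j ≥ 1, and let Δ = gcd_j (n j). Then the coefficient of the monomial X₁^{n 1} ⋯ X_m^{n m} in the cycle-index sum ∑_{g ∣ N} φ(g) · (X₁^g + ⋯ + X_m^g)^{N/g} over ℚ equals ∑_{d ∣ Δ} φ(d) · P(n/d), where P(n/d) = (N/d)! / ∏_j (n j / d)!. -/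
/-!
Since `∑ⱼ Xⱼ ^ g` is the `g`-th expansion of `∑ⱼ Xⱼ`, the coefficient of `X ^ n` in
`(∑ⱼ Xⱼ ^ g) ^ (N / g)` vanishes unless `g` divides every `n j`, in which case it is the
multinomial coefficient `P(n / g)`. The divisors `g` of `N` dividing every `n j` are exactly
the divisors of `Δ`.
-/

open Finset MvPolynomial

theorem Nat.filter_forall_dvd_divisors_sum {ι : Type*} [Fintype ι] (n : ι → ℕ) :
    {g ∈ (∑ i, n i).divisors | ∀ i, g ∣ n i} = (univ.gcd n).divisors := by
  ext g
  simp only [mem_filter, Nat.mem_divisors, Finset.dvd_gcd_iff, mem_univ, true_implies, ne_eq,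
    Finset.gcd_eq_zero_iff, Finset.sum_eq_zero_iff]
  exact ⟨fun ⟨⟨_, h0⟩, hdvd⟩ => ⟨hdvd, h0⟩,
    fun ⟨hdvd, h0⟩ => ⟨⟨dvd_sum fun i _ => hdvd i, h0⟩, hdvd⟩⟩

namespace MvPolynomial

variable {R σ : Type*} [CommSemiring R] [Fintype σ]

theorem sum_X_pow_eq_expand (p : ℕ) :
    (∑ i, X i ^ p : MvPolynomial σ R) = expand p (∑ i, X i) := by
  simp

theorem coeff_sum_X_pow_pow {g k : ℕ} (hg : g ≠ 0) (c : σ → ℕ) (hc : ∑ i, c i = g * k) :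
    coeff (Finsupp.equivFunOnFinite.symm c) ((∑ i, X i ^ g : MvPolynomial σ R) ^ k) =
      if ∀ i, g ∣ c i then (Nat.multinomial univ (fun i => c i / g) : R) else 0 := by
  rw [sum_X_pow_eq_expand, ← map_pow]
  split_ifs with hdvd
  · set d := Finsupp.equivFunOnFinite.symm fun i => c i / g
    have hcd : Finsupp.equivFunOnFinite.symm c = g • d := by
      ext i
      simp [d, Nat.mul_div_cancel' (hdvd i)]
    have hd : d.sum (fun _ m => m) = k := by
      rw [Finsupp.sum_fintype _ _ fun _ => rfl]
      simp only [d, Finsupp.coe_equivFunOnFinite_symm]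
      rw [← Nat.sum_div fun i _ => hdvd i, hc, Nat.mul_div_cancel_left _ (Nat.pos_of_ne_zero hg)]
    rw [hcd, coeff_expand_smul _ hg, coeff_sum_X_pow_of_fintype, if_pos hd,
      Finsupp.multinomial_eq_of_support_subset (subset_univ _)]
    rfl
  · obtain ⟨i, hi⟩ := not_forall.mp hdvd
    exact coeff_expand_of_not_dvd _ (by simpa using hi)

end MvPolynomial

theorem coeff_cycle_index_sum_general (m : ℕ) (n : Fin m → ℕ)
    (N : ℕ) (hN : N = ∑ j, n j) :
    MvPolynomial.coeff (Finsupp.equivFunOnFinite.symm n)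
      (∑ g ∈ N.divisors, (Nat.totient g : MvPolynomial (Fin m) ℚ) *
        (∑ j, (MvPolynomial.X j : MvPolynomial (Fin m) ℚ) ^ g) ^ (N / g)) =
      ∑ d ∈ (Finset.univ.gcd n).divisors,
        (Nat.totient d : ℚ) * (Nat.multinomial Finset.univ (fun j => n j / d) : ℚ) := by
  subst hN
  rw [← Nat.filter_forall_dvd_divisors_sum, sum_filter, coeff_sum]
  refine sum_congr rfl fun g hg => ?_
  have hgN : g ∣ ∑ j, n j := Nat.dvd_of_mem_divisors hg
  rw [← C_eq_coe_nat, coeff_C_mul,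
    coeff_sum_X_pow_pow (Nat.pos_of_mem_divisors hg).ne' n (Nat.mul_div_cancel' hgN).symm,
    mul_ite, mul_zero]

/-- The coefficient of `X₁^{n 1} ⋯ X_m^{n m}` in the cycle-index sum
`∑_{g ∣ N} φ(g) * (X₁^g + ⋯ + X_m^g)^{N/g}` equals `∑_{d ∣ Δ} φ(d) * P(n/d)`. -/
theorem coeff_cycle_index_sum (m : ℕ) (hm : 1 ≤ m) (n : Fin m → ℕ)
    (N : ℕ) (hN : N = ∑ j, n j) (hN1 : 1 ≤ N) :
    MvPolynomial.coeff (Finsupp.equivFunOnFinite.symm n)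
      (∑ g ∈ N.divisors, (Nat.totient g : MvPolynomial (Fin m) ℚ) *
        (∑ j, (MvPolynomial.X j : MvPolynomial (Fin m) ℚ) ^ g) ^ (N / g)) =
      ∑ d ∈ (Finset.univ.gcd n).divisors,
        (Nat.totient d : ℚ) * (Nat.multinomial Finset.univ (fun j => n j / d) : ℚ) :=
  coeff_cycle_index_sum_general m n N hN
end

section
/- Let m ≥ 1 and N be even with N ≥ 1, and let n : Fin m → ℕ with ∑_j n j = N. Suppose at least four indices j have n j odd. Then 2 · γ(D_N, n) = γ(C_N, n), where γ(C_N, n) and γ(D_N, n) are the numbers of cyclic and dihedral necklaces with multiplicities n. -/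
/-!
The reflection `f ↦ f ∘ neg` descends to an involution of the cyclic necklaces whose orbits are
exactly the dihedral necklaces, so it suffices that this involution has no fixed point. A fixed
point would be a coloring invariant under some reflection `x ↦ a - x`. That reflection permutes
every color class, so each class of odd size contains one of its fixed points; but `x ↦ a - x`
fixes only the solutions of `2 • x = a`, of which a cyclic group has at most two, while there are
at least three odd colors.
-/

open Finset

theorem Function.Involutive.exists_isFixedPt_of_odd_card {α : Type*} [Finite α] {σ : α → α}
    (hσ : Function.Involutive σ) (hodd : Odd (Nat.card α)) : ∃ x, Function.IsFixedPt σ x := by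
  classical
  have := Fintype.ofFinite α
  by_contra! hfree
  have hmod := Equiv.Perm.card_fixedPoints_modEq (f := σ) (p := 2) (n := 1) (funext hσ)
  have hnone : Fintype.card (Function.fixedPoints σ) = 0 :=
    Fintype.card_eq_zero_iff.mpr ⟨fun x => hfree x x.2⟩
  rw [hnone] at hmod
  rw [Nat.card_eq_fintype_card] at hodd
  simp [Nat.ModEq, Nat.odd_iff.mp hodd] at hmod

theorem card_filter_sub_eq_self_le_two {G : Type*} [AddCommGroup G] [Fintype G] [DecidableEq G]
    [IsAddCyclic G] (a : G) : #{x | a - x = x} ≤ 2 := by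
  rcases ({x | a - x = x} : Finset G).eq_empty_or_nonempty with hempty | ⟨x₀, hx₀⟩
  · simp [hempty]
  calc #{x | a - x = x} ≤ #{y : G | 2 • y = 0} := by
        refine card_le_card_of_injOn (· - x₀) (fun x hx => ?_) (sub_left_injective.injOn)
        simp only [mem_filter, mem_univ, true_and] at hx₀
        simp only [coe_filter, mem_univ, true_and, Set.mem_ofPred_eq] at hx ⊢
        rw [sub_eq_iff_eq_add] at hx hx₀
        rw [two_nsmul]
        calc x - x₀ + (x - x₀) = (x + x) - (x₀ + x₀) := by abel
          _ = 0 := by rw [← hx, ← hx₀, sub_self]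
    _ ≤ 2 := IsAddCyclic.card_nsmul_eq_zero_le two_pos

theorem Nat.card_eq_mul_of_forall_card_fiber {α β : Type*} [Finite α] [Finite β] (f : α → β)
    {k : ℕ} (hk : ∀ b, Nat.card {a // f a = b} = k) : Nat.card α = k * Nat.card β := by
  have := Fintype.ofFinite β
  rw [← Nat.card_congr (Equiv.sigmaFiberEquiv f), Nat.card_sigma]
  simp [hk, mul_comm]

theorem addRight_zsmul_mem {G : Type*} [AddGroup G] {H : Subgroup (Equiv.Perm G)} {g : G}
    (hg : Equiv.addRight g ∈ H) (k : ℤ) : Equiv.addRight (k • g) ∈ H := by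
  induction k using Int.induction_on with
  | zero => simp [H.one_mem]
  | succ k ih => rw [add_zsmul, one_zsmul, Equiv.addRight_add]; exact H.mul_mem hg ih
  | pred k ih =>
    rw [sub_zsmul, one_zsmul, Equiv.addRight_add, ← Equiv.neg_addRight]
    exact H.mul_mem (H.inv_mem hg) ih

theorem exists_eq_add_or_eq_sub_of_mem_closure {G : Type*} [AddCommGroup G] {g : G}
    {σ : Equiv.Perm G} (hσ : σ ∈ Subgroup.closure {Equiv.addRight g, Equiv.neg G}) :
    (∃ c, ∀ x, σ x = x + c) ∨ (∃ c, ∀ x, σ x = c - x) := by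
  induction hσ using Subgroup.closure_induction with
  | mem τ hτ =>
    rcases hτ with rfl | rfl
    · exact Or.inl ⟨g, fun _ => rfl⟩
    · exact Or.inr ⟨0, fun x => (zero_sub x).symm⟩
  | one => exact Or.inl ⟨0, fun x => (add_zero x).symm⟩
  | mul σ τ _ _ hσ hτ =>
    simp only [Equiv.Perm.mul_apply]
    rcases hσ with ⟨c, hc⟩ | ⟨c, hc⟩ <;> rcases hτ with ⟨d, hd⟩ | ⟨d, hd⟩
    · exact Or.inl ⟨d + c, fun x => by rw [hd, hc, add_assoc]⟩
    · exact Or.inr ⟨d + c, fun x => by rw [hd, hc]; abel⟩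
    · exact Or.inr ⟨c - d, fun x => by rw [hd, hc]; abel⟩
    · exact Or.inl ⟨c - d, fun x => by rw [hd, hc]; abel⟩
  | inv σ _ hσ =>
    rcases hσ with ⟨c, hc⟩ | ⟨c, hc⟩
    · exact Or.inl ⟨-c, fun x => by rw [Equiv.Perm.inv_eq_iff_eq, hc, neg_add_cancel_right]⟩
    · exact Or.inr ⟨c, fun x => by rw [Equiv.Perm.inv_eq_iff_eq, hc, sub_sub_cancel]⟩

section Colorings

variable {N m : ℕ} {n : Fin m → ℕ}

theorem IsColoring.comp_perm {f : ZMod N → Fin m} (hf : IsColoring N m n f)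
    (σ : Equiv.Perm (ZMod N)) : IsColoring N m n (f ∘ σ) :=
  fun j => (Nat.card_congr (σ.subtypeEquiv fun _ => Iff.rfl)).trans (hf j)

theorem IsColoring.not_forall_sub_eq [NeZero N] {f : ZMod N → Fin m} (hf : IsColoring N m n f)
    (hodd : 3 ≤ #{j | Odd (n j)}) (a : ZMod N) : ¬ ∀ x, f (a - x) = f x := by
  intro hsymm
  have hfix : ∀ j, Odd (n j) → ∃ x, f x = j ∧ a - x = x := by
    intro j hj
    let ρ : {x // f x = j} → {x // f x = j} := fun x => ⟨a - x, (hsymm x).trans x.2⟩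
    obtain ⟨x, hx⟩ := Function.Involutive.exists_isFixedPt_of_odd_card (σ := ρ)
      (fun x => Subtype.ext (sub_sub_cancel a x)) (hf j ▸ hj)
    exact ⟨x, x.2, congrArg Subtype.val hx⟩
  have hcover : #{j | Odd (n j)} ≤ #(({x | a - x = x} : Finset (ZMod N)).image f) := by
    refine card_le_card fun j hj => ?_
    obtain ⟨x, rfl, hx⟩ := hfix j (mem_filter.mp hj).2
    exact mem_image_of_mem f (mem_filter.mpr ⟨mem_univ x, hx⟩)
  have := card_image_le (s := ({x | a - x = x} : Finset (ZMod N))) (f := f)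
  have := card_filter_sub_eq_self_le_two a
  omega

def reflectColoring (f : {f // IsColoring N m n f}) : {f // IsColoring N m n f} :=
  ⟨f.1 ∘ Equiv.neg _, f.2.comp_perm _⟩

theorem cyclicSetoid_le_dihedralSetoid : cyclicSetoid N m n ≤ dihedralSetoid N m n := by
  rintro f g ⟨c, hc⟩
  refine ⟨Equiv.addRight c, ?_, hc⟩
  rw [← ZMod.intCast_zmod_cast c, ← zsmul_one]
  exact addRight_zsmul_mem (Subgroup.subset_closure (Set.mem_insert _ _)) _

theorem dihedralSetoid_reflectColoring (f : {f // IsColoring N m n f}) :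
    dihedralSetoid N m n f (reflectColoring f) :=
  ⟨Equiv.neg _, Subgroup.subset_closure (Set.mem_insert_of_mem _ rfl), fun _ => rfl⟩

theorem cyclicSetoid_or_of_dihedralSetoid {f g : {f // IsColoring N m n f}}
    (h : dihedralSetoid N m n f g) :
    cyclicSetoid N m n f g ∨ cyclicSetoid N m n (reflectColoring f) g := by
  obtain ⟨σ, hσ, hfg⟩ := h
  rcases exists_eq_add_or_eq_sub_of_mem_closure hσ with ⟨c, hc⟩ | ⟨c, hc⟩
  · exact Or.inl ⟨c, fun x => by rw [hfg, hc]⟩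
  · refine Or.inr ⟨-c, fun x => ?_⟩
    rw [hfg, hc]
    show f.1 (c - x) = f.1 (-(x + -c))
    rw [neg_add_rev, neg_neg, sub_eq_add_neg]

theorem not_cyclicSetoid_reflectColoring [NeZero N] (hodd : 3 ≤ #{j | Odd (n j)})
    (f : {f // IsColoring N m n f}) : ¬ cyclicSetoid N m n f (reflectColoring f) := by
  rintro ⟨c, hc⟩
  refine f.2.not_forall_sub_eq hodd c fun x => ?_
  simpa only [reflectColoring, Function.comp_apply, Equiv.neg_apply, neg_sub, sub_add_cancel]
    using hc (x - c)

def cyclicToDihedral : Quotient (cyclicSetoid N m n) → Quotient (dihedralSetoid N m n) :=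
  Setoid.map_of_le cyclicSetoid_le_dihedralSetoid

theorem card_fiber_cyclicToDihedral [NeZero N] (hodd : 3 ≤ #{j | Odd (n j)})
    (q : Quotient (dihedralSetoid N m n)) : Nat.card {p // cyclicToDihedral p = q} = 2 := by
  induction q using Quotient.ind with | _ f =>
  have hfiber : {p | cyclicToDihedral p = Quotient.mk _ f} =
      {Quotient.mk _ f, Quotient.mk (cyclicSetoid N m n) (reflectColoring f)} := by
    ext p
    induction p using Quotient.ind with | _ g =>
    simp only [cyclicToDihedral, Setoid.map_of_le, Quotient.map'_mk'', id, Set.mem_ofPred_eq,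
      Set.mem_insert_iff, Set.mem_singleton_iff, Quotient.eq]
    constructor
    · intro h
      exact (cyclicSetoid_or_of_dihedralSetoid (Setoid.symm' _ h)).imp (Setoid.symm' _)
        (Setoid.symm' _)
    · rintro (h | h)
      · exact cyclicSetoid_le_dihedralSetoid h
      · exact Setoid.trans' _ (cyclicSetoid_le_dihedralSetoid h)
          (Setoid.symm' _ (dihedralSetoid_reflectColoring f))
  have hne : (Quotient.mk (cyclicSetoid N m n) f) ≠ Quotient.mk _ (reflectColoring f) :=
    fun h => not_cyclicSetoid_reflectColoring hodd f (Quotient.exact h)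
  rw [← Set.ncard_pair hne, ← hfiber, ← Nat.card_coe_set_eq]
  rfl

end Colorings

theorem dihedral_necklace_even_many_odd_colors_general (m N : ℕ) (hN : 1 ≤ N) (n : Fin m → ℕ)
    (hodd : 4 ≤ (Finset.univ.filter (fun j => Odd (n j))).card) :
    2 * gammaD N m n = gammaC N m n := by
  have : NeZero N := ⟨by omega⟩
  exact (Nat.card_eq_mul_of_forall_card_fiber _
    (card_fiber_cyclicToDihedral (by omega))).symm

/-- Dihedral necklaces for even `N` with at least four odd multiplicities:
`2 γ(D_N, n) = γ(C_N, n)`. -/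
theorem dihedral_necklace_even_many_odd_colors (m N : ℕ) (hm : 1 ≤ m) (hN : 1 ≤ N)
    (hNeven : Even N) (n : Fin m → ℕ) (hsum : ∑ j, n j = N)
    (hodd : 4 ≤ (Finset.univ.filter (fun j => Odd (n j))).card) :
    2 * gammaD N m n = gammaC N m n :=
  dihedral_necklace_even_many_odd_colors_general m N hN n hodd
end
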